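/- arXiv:1606.07215 — 4 statements merged into one kernel-verified Lean document; each statement's English description precedes it below -/
import Mathlib

section
/- Let θ be a probability measure on ℝⁿ with finite second moment, let X be a random vector with distribution θ, and let G be a symmetric positive definite (n+m)×(n+m) matrix with blocks G = [[G^{XX}, G^{XU}], [G^{UX}, G^{UU}]] (G^{XX} of size n×n, G^{UU} of size m×m). Define q*(x) := −(G^{UU})⁻¹ G^{UX} (x − μ(θ)). Then q* is measurable, ∫_{ℝⁿ} q*(x) θ(dx) = 0, and tr(G · Cov([X; q*(X)])) = tr(P · Cov(θ)), where P := G^{XX} − G^{XU} (G^{UU})⁻¹ G^{UX}. -/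
open Matrix MeasureTheory

/-- Coordinatewise mean of a random vector. -/
noncomputable def vecMean {Ω : Type*} [MeasurableSpace Ω] (μ : Measure Ω)
    {k : Type*} (S : Ω → k → ℝ) : k → ℝ :=
  fun i => ∫ ω, S ω i ∂μ

/-- Covariance matrix of a random vector:
`Cov(S) = E[(S − E[S])(S − E[S])ᵀ]`. -/
noncomputable def vecCov {Ω : Type*} [MeasurableSpace Ω] (μ : Measure Ω)
    {k : Type*} (S : Ω → k → ℝ) : Matrix k k ℝ :=
  Matrix.of fun i j => ∫ ω, (S ω i - vecMean μ S i) * (S ω j - vecMean μ S j) ∂μ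

/-- Mean `μ(θ)` of a probability measure `θ` on `ℝⁿ`. -/
noncomputable def measMean {n : ℕ} (θ : Measure (Fin n → ℝ)) : Fin n → ℝ :=
  vecMean θ id

/-- Covariance `Cov(θ)` of a probability measure `θ` on `ℝⁿ`. -/
noncomputable def measCov {n : ℕ} (θ : Measure (Fin n → ℝ)) :
    Matrix (Fin n) (Fin n) ℝ :=
  vecCov θ id

/-!
Since `G` is positive definite, so is its block `G^{UU}`, which is therefore invertible.
With `A = -(G^{UU})⁻¹ G^{UX}` the map `q*` is affine, so `[X; q*(X)] = M X + b` with `M = [1; A]`,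
and `Cov([X; q*(X)]) = M Cov(θ) Mᵀ`. By cyclicity of the trace the left-hand side is
`tr(Mᵀ G M Cov(θ))`, and `Mᵀ G M = G^{XX} + G^{XU} A + Aᵀ (G^{UX} + G^{UU} A)`, whose last term
vanishes because `G^{UU} A = -G^{UX}`; what remains is the Schur complement `P`.
-/

open ProbabilityTheory

section Moments

variable {Ω : Type*} [MeasurableSpace Ω] {μ : Measure Ω} {k l : Type*}

lemma vecCov_apply (S : Ω → k → ℝ) (i j : k) :
    vecCov μ S i j = cov[fun ω => S ω i, fun ω => S ω j; μ] := rfl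

lemma vecCov_comp {Ω' : Type*} [MeasurableSpace Ω'] {X : Ω → Ω'} (hX : Measurable X)
    {f : Ω' → k → ℝ} (hf : Measurable f) :
    vecCov μ (fun ω => f (X ω)) = vecCov (μ.map X) f := by
  ext i j
  rw [vecCov_apply, vecCov_apply, covariance_map_fun _ _ hX.aemeasurable]
  all_goals fun_prop

variable [Fintype k]

lemma integral_eq_vecMean {S : Ω → k → ℝ} (hS : ∀ i, Integrable (fun ω => S ω i) μ) :
    ∫ ω, S ω ∂μ = vecMean μ S :=
  funext (eval_integral hS)

lemma integrable_mulVec_add_apply [IsFiniteMeasure μ] {S : Ω → k → ℝ}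
    (hS : ∀ i, Integrable (fun ω => S ω i) μ) (M : Matrix l k ℝ) (b : l → ℝ) (a : l) :
    Integrable (fun ω => (M *ᵥ S ω + b) a) μ :=
  (integrable_finsetSum _ fun i _ => (hS i).const_mul (M a i)).add (integrable_const (b a))

lemma vecMean_mulVec_add [IsProbabilityMeasure μ] {S : Ω → k → ℝ}
    (hS : ∀ i, Integrable (fun ω => S ω i) μ) (M : Matrix l k ℝ) (b : l → ℝ) :
    vecMean μ (fun ω => M *ᵥ S ω + b) = M *ᵥ vecMean μ S + b := by
  funext a
  simp only [vecMean, Pi.add_apply, mulVec, dotProduct]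
  rw [integral_add (integrable_finsetSum _ fun i _ => (hS i).const_mul _) (integrable_const _),
    integral_finsetSum _ fun i _ => (hS i).const_mul _]
  simp [integral_const_mul]

lemma vecCov_mulVec_add [IsProbabilityMeasure μ] {S : Ω → k → ℝ}
    (hS : ∀ i, MemLp (fun ω => S ω i) 2 μ) (M : Matrix l k ℝ) (b : l → ℝ) :
    vecCov μ (fun ω => M *ᵥ S ω + b) = M * vecCov μ S * Mᵀ := by
  ext a c
  have hMS : ∀ a i, MemLp (fun ω => M a i * S ω i) 2 μ := fun a i => (hS i).const_mul _
  have hsum : ∀ a, Integrable (fun ω => ∑ i, M a i * S ω i) μ := fun a =>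
    (memLp_finsetSum _ fun i _ => hMS a i).integrable one_le_two
  simp only [vecCov_apply, Pi.add_apply, mulVec, dotProduct]
  rw [covariance_add_const_left (hsum a), covariance_add_const_right (hsum c),
    covariance_fun_sum_fun_sum (hMS a) (hMS c)]
  simp only [covariance_const_mul_left, covariance_const_mul_right, mul_apply, transpose_apply,
    Finset.sum_mul, vecCov_apply]
  rw [Finset.sum_comm]
  exact Finset.sum_congr rfl fun j _ => Finset.sum_congr rfl fun i _ => by ring

end Moments

section BlockMatrix

variable {R : Type*} [CommRing R] {p q : Type*} [Fintype p] [Fintype q] [DecidableEq p]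
  [DecidableEq q]

lemma transpose_fromRows_mul_fromBlocks_mul_fromRows_eq_schur
    (Gxx : Matrix p p R) (Gxu : Matrix p q R) (Gux : Matrix q p R) {Guu : Matrix q q R}
    (hGuu : IsUnit Guu.det) :
    (fromRows (1 : Matrix p p R) (-(Guu⁻¹ * Gux)))ᵀ * fromBlocks Gxx Gxu Gux Guu *
        fromRows (1 : Matrix p p R) (-(Guu⁻¹ * Gux)) =
      Gxx - Gxu * Guu⁻¹ * Gux := by
  have hA : Guu * -(Guu⁻¹ * Gux) = -Gux := by
    rw [Matrix.mul_neg, ← Matrix.mul_assoc, mul_nonsing_inv _ hGuu, Matrix.one_mul]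
  rw [Matrix.mul_assoc, fromBlocks_mul_fromRows, transpose_fromRows, fromCols_mul_fromRows, hA]
  simp [Matrix.mul_assoc, sub_eq_add_neg]

end BlockMatrix

theorem stmt4_general (n m : ℕ)
    (θ : Measure (Fin n → ℝ)) [IsProbabilityMeasure θ]
    (hθ2 : Integrable (fun x => ‖x‖ ^ 2) θ)
    {Ω : Type*} [MeasurableSpace Ω] (P : Measure Ω)
    (X : Ω → Fin n → ℝ) (hX : Measurable X) (hXlaw : Measure.map X P = θ)
    (Gxx : Matrix (Fin n) (Fin n) ℝ) (Gxu : Matrix (Fin n) (Fin m) ℝ)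
    (Gux : Matrix (Fin m) (Fin n) ℝ) (Guu : Matrix (Fin m) (Fin m) ℝ)
    (hG : (Matrix.fromBlocks Gxx Gxu Gux Guu).PosDef) :
    let G := Matrix.fromBlocks Gxx Gxu Gux Guu
    let Pm := Gxx - Gxu * Guu⁻¹ * Gux
    let qstar : (Fin n → ℝ) → Fin m → ℝ :=
      fun x => -(Guu⁻¹.mulVec (Gux.mulVec (x - measMean θ)))
    Measurable qstar ∧ (∫ x, qstar x ∂θ) = 0 ∧
      (G * vecCov P (fun ω => Sum.elim (X ω) (qstar (X ω)))).trace =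
        (Pm * measCov θ).trace := by
  intro G Pm qstar
  set A := -(Guu⁻¹ * Gux)
  have hGuu : IsUnit Guu.det := (hG.submatrix Sum.inr_injective).det_pos.ne'.isUnit
  have hθ : ∀ i, MemLp (fun x : Fin n → ℝ => x i) 2 θ :=
    ((memLp_two_iff_integrable_sq_norm aestronglyMeasurable_id).2 hθ2).eval
  have hθ1 : ∀ i, Integrable (fun x : Fin n → ℝ => x i) θ :=
    fun i => (hθ i).integrable one_le_two
  have hq : qstar = fun x => A *ᵥ x + -(A *ᵥ measMean θ) := by
    funext x
    show -(Guu⁻¹ *ᵥ Gux *ᵥ (x - measMean θ)) = _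
    rw [mulVec_mulVec, neg_mulVec, neg_mulVec, mulVec_sub]
    abel
  set M : Matrix (Fin n ⊕ Fin m) (Fin n) ℝ := fromRows 1 A
  set b : Fin n ⊕ Fin m → ℝ := Sum.elim 0 (-(A *ᵥ measMean θ))
  have hY : (fun ω => Sum.elim (X ω) (qstar (X ω))) = fun ω => M *ᵥ X ω + b := by
    funext ω
    rw [fromRows_mulVec, hq, one_mulVec, ← Sum.elim_add_add, add_zero]
  refine ⟨by rw [hq]; fun_prop, ?_, ?_⟩
  · rw [hq, integral_eq_vecMean (integrable_mulVec_add_apply hθ1 _ _), vecMean_mulVec_add hθ1]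
    exact add_neg_cancel _
  · rw [hY, vecCov_comp (f := fun x => M *ᵥ x + b) hX (by fun_prop), hXlaw,
      vecCov_mulVec_add hθ]
    change (G * (M * measCov θ * Mᵀ)).trace = _
    rw [← Matrix.mul_assoc, ← Matrix.mul_assoc, trace_mul_cycle, ← Matrix.mul_assoc,
      transpose_fromRows_mul_fromBlocks_mul_fromRows_eq_schur _ _ _ hGuu]

/-- For a probability measure `θ` on `ℝⁿ` with finite second
moment, a random vector `X` with distribution `θ`, and a symmetric positive
definite block matrix `G = [[Gxx, Gxu], [Gux, Guu]]`, the function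
`q*(x) = −Guu⁻¹ Gux (x − μ(θ))` is measurable, has `∫ q* dθ = 0`, and
satisfies `tr(G · Cov([X; q*(X)])) = tr(P · Cov(θ))` where
`P = Gxx − Gxu Guu⁻¹ Gux`. -/
theorem stmt4 (n m : ℕ)
    (θ : Measure (Fin n → ℝ)) [IsProbabilityMeasure θ]
    (hθ2 : Integrable (fun x => ‖x‖ ^ 2) θ)
    {Ω : Type*} [MeasurableSpace Ω] (P : Measure Ω) [IsProbabilityMeasure P]
    (X : Ω → Fin n → ℝ) (hX : Measurable X) (hXlaw : Measure.map X P = θ)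
    (Gxx : Matrix (Fin n) (Fin n) ℝ) (Gxu : Matrix (Fin n) (Fin m) ℝ)
    (Gux : Matrix (Fin m) (Fin n) ℝ) (Guu : Matrix (Fin m) (Fin m) ℝ)
    (hG : (Matrix.fromBlocks Gxx Gxu Gux Guu).PosDef) :
    let G := Matrix.fromBlocks Gxx Gxu Gux Guu
    let Pm := Gxx - Gxu * Guu⁻¹ * Gux
    let qstar : (Fin n → ℝ) → Fin m → ℝ :=
      fun x => -(Guu⁻¹.mulVec (Gux.mulVec (x - measMean θ)))
    Measurable qstar ∧ (∫ x, qstar x ∂θ) = 0 ∧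
      (G * vecCov P (fun ω => Sum.elim (X ω) (qstar (X ω)))).trace =
        (Pm * measCov θ).trace :=
  stmt4_general n m θ hθ2 P X hX hXlaw Gxx Gxu Gux Guu hG
end

section
/- Let θ be a probability measure on ℝⁿ with finite second moment, let X be a random vector with distribution θ, and let G be a symmetric positive definite (n+m)×(n+m) matrix with blocks G = [[G^{XX}, G^{XU}], [G^{UX}, G^{UU}]], and set P := G^{XX} − G^{XU} (G^{UU})⁻¹ G^{UX}. Then for every measurable function q : ℝⁿ → ℝᵐ with ∫ ‖q(x)‖² θ(dx) < ∞ and ∫_{ℝⁿ} q(x) θ(dx) = 0, one has tr(G · Cov([X; q(X)])) ≥ tr(P · Cov(θ)). -/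
open Matrix MeasureTheory

/-! For `v = (x, u)` the quadratic form of `G = [[A, B], [Bᵀ, D]]` splits as
`vᵀ G v = (D⁻¹ Bᵀ x + u)ᵀ D (D⁻¹ Bᵀ x + u) + xᵀ (A − B D⁻¹ Bᵀ) x`, so it dominates the Schur
complement form pointwise. Taking `v` to be the centred vector `[X; q(X)]` and integrating, both
traces become expectations of these quadratic forms. -/

theorem Matrix.PosDef.dotProduct_schur_mulVec_le {m n : Type*} [Fintype m] [Fintype n]
    [DecidableEq n] {A : Matrix m m ℝ} {B : Matrix m n ℝ} {C : Matrix n m ℝ} {D : Matrix n n ℝ}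
    (hG : (fromBlocks A B C D).PosDef) (x : m → ℝ) (u : n → ℝ) :
    x ⬝ᵥ (A - B * D⁻¹ * C) *ᵥ x ≤ (x ⊕ᵥ u) ⬝ᵥ fromBlocks A B C D *ᵥ (x ⊕ᵥ u) := by
  obtain ⟨-, hBC, -, hD⟩ := isHermitian_fromBlocks_iff.mp hG.1
  have hDpos : D.PosDef := hG.submatrix (e := Sum.inr) Sum.inr_injective
  have : Invertible D := hDpos.isUnit.invertible
  subst hBC
  have hsplit := schur_complement_eq₂₂ A B x u hD
  simp only [star_trivial] at hsplit
  rw [dotProduct_mulVec, dotProduct_mulVec, hsplit]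
  refine le_add_of_nonneg_left ?_
  rw [← dotProduct_mulVec]
  exact hDpos.posSemidef.dotProduct_mulVec_nonneg _

section Covariance

variable {Ω : Type*} [MeasurableSpace Ω] {μ : Measure Ω} {k : Type*}

theorem vecMean_map {Ω' : Type*} [MeasurableSpace Ω'] {f : Ω → Ω'} (hf : AEMeasurable f μ)
    {S : Ω' → k → ℝ} (hS : Measurable S) :
    vecMean (μ.map f) S = vecMean μ (fun ω => S (f ω)) := by
  ext i
  exact integral_map hf (measurable_pi_iff.mp hS i).aestronglyMeasurable

theorem vecCov_map {Ω' : Type*} [MeasurableSpace Ω'] {f : Ω → Ω'} (hf : AEMeasurable f μ)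
    {S : Ω' → k → ℝ} (hS : Measurable S) :
    vecCov (μ.map f) S = vecCov μ (fun ω => S (f ω)) := by
  ext i j
  rw [vecCov, vecCov, of_apply, of_apply, vecMean_map hf hS]
  refine integral_map hf (Measurable.aestronglyMeasurable ?_)
  exact ((measurable_pi_iff.mp hS i).sub_const _).mul ((measurable_pi_iff.mp hS j).sub_const _)

theorem measCov_map {n : ℕ} {X : Ω → Fin n → ℝ} (hX : AEMeasurable X μ) :
    measCov (μ.map X) = vecCov μ X :=
  vecCov_map hX measurable_id

variable [Fintype k]

theorem integrable_dotProduct_mulVec (M : Matrix k k ℝ) {V : Ω → k → ℝ}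
    (hV : ∀ i, MemLp (fun ω => V ω i) 2 μ) :
    Integrable (fun ω => V ω ⬝ᵥ M *ᵥ V ω) μ := by
  simp only [dotProduct, mulVec, Finset.mul_sum]
  refine integrable_finsetSum _ fun i _ => integrable_finsetSum _ fun j _ => ?_
  simpa only [Pi.mul_apply, mul_left_comm] using ((hV i).integrable_mul (hV j)).const_mul (M i j)

theorem trace_mul_vecCov [IsFiniteMeasure μ] (M : Matrix k k ℝ) {S : Ω → k → ℝ}
    (hS : ∀ i, MemLp (fun ω => S ω i) 2 μ) :
    (M * vecCov μ S).trace =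
      ∫ ω, (S ω - vecMean μ S) ⬝ᵥ M *ᵥ (S ω - vecMean μ S) ∂μ := by
  set V : Ω → k → ℝ := fun ω => S ω - vecMean μ S
  have hV : ∀ i, MemLp (fun ω => V ω i) 2 μ := fun i => (hS i).sub (memLp_const _)
  have hterm : ∀ i j, Integrable (fun ω => V ω i * (M i j * V ω j)) μ := fun i j => by
    simpa only [Pi.mul_apply, mul_left_comm] using ((hV i).integrable_mul (hV j)).const_mul (M i j)
  calc (M * vecCov μ S).trace = ∑ i, ∑ j, ∫ ω, V ω i * (M i j * V ω j) ∂μ := by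
        refine Finset.sum_congr rfl fun i _ => Finset.sum_congr rfl fun j _ => ?_
        change M i j * vecCov μ S j i = _
        rw [vecCov, of_apply, ← integral_const_mul]
        congr 1 with ω
        simp only [V, Pi.sub_apply]
        ring
    _ = ∫ ω, V ω ⬝ᵥ M *ᵥ V ω ∂μ := by
        simp only [dotProduct, mulVec, Finset.mul_sum]
        rw [integral_finsetSum _ fun i _ => integrable_finsetSum _ fun j _ => hterm i j]
        exact Finset.sum_congr rfl fun i _ => (integral_finsetSum _ fun j _ => hterm i j).symm

end Covariance

theorem memLp_two_comp_of_integrable_sq_norm {Ω Ω' E : Type*} [MeasurableSpace Ω]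
    [MeasurableSpace Ω'] [NormedAddCommGroup E] {μ : Measure Ω} {f : Ω → Ω'} {g : Ω' → E}
    (hf : AEMeasurable f μ) (hg : AEStronglyMeasurable g (μ.map f))
    (h : Integrable (fun x => ‖g x‖ ^ 2) (μ.map f)) :
    MemLp (fun ω => g (f ω)) 2 μ :=
  (memLp_map_measure_iff hg hf).mp ((memLp_two_iff_integrable_sq_norm hg).mpr h)

theorem stmt5_general (n m : ℕ)
    (θ : Measure (Fin n → ℝ))
    (hθ2 : Integrable (fun x => ‖x‖ ^ 2) θ)
    {Ω : Type*} [MeasurableSpace Ω] (P : Measure Ω) [IsProbabilityMeasure P]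
    (X : Ω → Fin n → ℝ) (hX : Measurable X) (hXlaw : Measure.map X P = θ)
    (Gxx : Matrix (Fin n) (Fin n) ℝ) (Gxu : Matrix (Fin n) (Fin m) ℝ)
    (Gux : Matrix (Fin m) (Fin n) ℝ) (Guu : Matrix (Fin m) (Fin m) ℝ)
    (hG : (Matrix.fromBlocks Gxx Gxu Gux Guu).PosDef) :
    ∀ q : (Fin n → ℝ) → Fin m → ℝ, Measurable q →
      Integrable (fun x => ‖q x‖ ^ 2) θ → (∫ x, q x ∂θ) = 0 →
      ((Gxx - Gxu * Guu⁻¹ * Gux) * measCov θ).trace ≤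
        ((Matrix.fromBlocks Gxx Gxu Gux Guu) *
          vecCov P (fun ω => Sum.elim (X ω) (q (X ω)))).trace := by
  intro q hq hq2 _
  subst hXlaw
  have hXL2 : MemLp X 2 P :=
    memLp_two_comp_of_integrable_sq_norm (g := id) hX.aemeasurable
      aestronglyMeasurable_id hθ2
  have hqL2 : MemLp (fun ω => q (X ω)) 2 P :=
    memLp_two_comp_of_integrable_sq_norm hX.aemeasurable hq.aestronglyMeasurable hq2
  set Z : Ω → Fin n ⊕ Fin m → ℝ := fun ω => Sum.elim (X ω) (q (X ω))
  have hZL2 : ∀ i, MemLp (fun ω => Z ω i) 2 P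
    | .inl i => hXL2.eval i
    | .inr j => hqL2.eval j
  have hZcentred : ∀ ω, Z ω - vecMean P Z =
      (X ω - vecMean P X) ⊕ᵥ (q (X ω) - vecMean P fun ω => q (X ω)) := fun ω => by
    ext (i | j) <;> rfl
  rw [measCov_map hX.aemeasurable, trace_mul_vecCov _ hXL2.eval, trace_mul_vecCov _ hZL2]
  refine integral_mono (integrable_dotProduct_mulVec _ fun i => (hXL2.eval i).sub (memLp_const _))
    (integrable_dotProduct_mulVec _ fun i => (hZL2 i).sub (memLp_const _)) fun ω => ?_
  rw [hZcentred]
  exact hG.dotProduct_schur_mulVec_le _ _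

/-- For a probability measure `θ` on `ℝⁿ` with finite second
moment, a random vector `X` with distribution `θ`, and a symmetric positive
definite block matrix `G = [[Gxx, Gxu], [Gux, Guu]]` with Schur complement
`P = Gxx − Gxu Guu⁻¹ Gux`: for every measurable, θ-square-integrable
`q : ℝⁿ → ℝᵐ` with `∫ q dθ = 0`, one has
`tr(G · Cov([X; q(X)])) ≥ tr(P · Cov(θ))`. -/
theorem stmt5 (n m : ℕ)
    (θ : Measure (Fin n → ℝ)) [IsProbabilityMeasure θ]
    (hθ2 : Integrable (fun x => ‖x‖ ^ 2) θ)
    {Ω : Type*} [MeasurableSpace Ω] (P : Measure Ω) [IsProbabilityMeasure P]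
    (X : Ω → Fin n → ℝ) (hX : Measurable X) (hXlaw : Measure.map X P = θ)
    (Gxx : Matrix (Fin n) (Fin n) ℝ) (Gxu : Matrix (Fin n) (Fin m) ℝ)
    (Gux : Matrix (Fin m) (Fin n) ℝ) (Guu : Matrix (Fin m) (Fin m) ℝ)
    (hG : (Matrix.fromBlocks Gxx Gxu Gux Guu).PosDef) :
    ∀ q : (Fin n → ℝ) → Fin m → ℝ, Measurable q →
      Integrable (fun x => ‖q x‖ ^ 2) θ → (∫ x, q x ∂θ) = 0 →
      ((Gxx - Gxu * Guu⁻¹ * Gux) * measCov θ).trace ≤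
        ((Matrix.fromBlocks Gxx Gxu Gux Guu) *
          vecCov P (fun ω => Sum.elim (X ω) (q (X ω)))).trace :=
  stmt5_general n m θ hθ2 P X hX hXlaw Gxx Gxu Gux Guu hG
end

section
/- Fix a horizon T ∈ ℕ, a packet-drop probability p ∈ [0,1], matrices A ∈ ℝ^{n×n}, B^L ∈ ℝ^{n×m_L}, B^R ∈ ℝ^{n×m_R}, let M := [A, B^L, B^R] ∈ ℝ^{n×(n+m_L+m_R)}, and for each t ∈ {0,…,T} let R_t be a symmetric positive definite matrix of size (n+m_L+m_R). Define backwards: P_{T+1} = P̃_{T+1} = 0 (the n×n zero matrix); H_t = Mᵀ P_{t+1} M; H̃_t = Mᵀ P̃_{t+1} M; G_t = R_t + H_t; G̃_t = R_t + (1−p) H_t + p H̃_t; P_t = G_t^{XX} − [G_t^{XL}, G_t^{XR}] · ([[G_t^{LL}, G_t^{LR}], [G_t^{RL}, G_t^{RR}]])⁻¹ · [G_t^{LX}; G_t^{RX}] (Schur complement of the lower-right (m_L+m_R)×(m_L+m_R) block of G_t); P̃_t = G̃_t^{XX} − G̃_t^{XL} (G̃_t^{LL})⁻¹ G̃_t^{LX}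 (Schur complement of the L-block in the top-left (n+m_L)×(n+m_L) submatrix of G̃_t). Then for every t ∈ {0,…,T}: G_t and G̃_t are symmetric positive definite (in particular the blocks being inverted are invertible, so the recursion is well defined), and P_t and P̃_t are symmetric positive semidefinite. -/
open Matrix

/-- The horizontally concatenated matrix `M = [A, Bˡ, Bʳ]`. -/
def catM (n mL mR : ℕ) (A : Matrix (Fin n) (Fin n) ℝ)
    (BL : Matrix (Fin n) (Fin mL) ℝ) (BR : Matrix (Fin n) (Fin mR) ℝ) :
    Matrix (Fin n) (Fin n ⊕ (Fin mL ⊕ Fin mR)) ℝ :=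
  Matrix.of fun i => Sum.elim (A i) (Sum.elim (BL i) (BR i))

/-- The backward Riccati-like recursion of the paper, returning the pair
`(P_t, P̃_t)` at time `t`, with `P_{T+1} = P̃_{T+1} = 0`:
`H_t = Mᵀ P_{t+1} M`, `H̃_t = Mᵀ P̃_{t+1} M`, `G_t = R_t + H_t`,
`G̃_t = R_t + (1−p) H_t + p H̃_t`, `P_t` is the Schur complement of the
lower-right `(mL+mR)×(mL+mR)` block of `G_t`, and `P̃_t` is the Schur
complement of the `L`-block in the top-left `(n+mL)×(n+mL)` submatrix of
`G̃_t`. -/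
noncomputable def backRec (n mL mR : ℕ) (T : ℕ) (p : ℝ)
    (A : Matrix (Fin n) (Fin n) ℝ) (BL : Matrix (Fin n) (Fin mL) ℝ)
    (BR : Matrix (Fin n) (Fin mR) ℝ)
    (R : ℕ → Matrix (Fin n ⊕ (Fin mL ⊕ Fin mR)) (Fin n ⊕ (Fin mL ⊕ Fin mR)) ℝ)
    (t : ℕ) : Matrix (Fin n) (Fin n) ℝ × Matrix (Fin n) (Fin n) ℝ :=
  if T + 1 ≤ t then (0, 0)
  else
    let M := catM n mL mR A BL BR
    let Pn := (backRec n mL mR T p A BL BR R (t + 1)).1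
    let Ptn := (backRec n mL mR T p A BL BR R (t + 1)).2
    let H := Mᵀ * Pn * M
    let Ht := Mᵀ * Ptn * M
    let G := R t + H
    let Gt := R t + (1 - p) • H + p • Ht
    let P := G.submatrix Sum.inl Sum.inl -
      G.submatrix Sum.inl Sum.inr * (G.submatrix Sum.inr Sum.inr)⁻¹ *
        G.submatrix Sum.inr Sum.inl
    let Pt := Gt.submatrix Sum.inl Sum.inl -
      Gt.submatrix Sum.inl (fun j : Fin mL => Sum.inr (Sum.inl j)) *
        (Gt.submatrix (fun i : Fin mL => Sum.inr (Sum.inl i))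
          (fun j : Fin mL => Sum.inr (Sum.inl j)))⁻¹ *
        Gt.submatrix (fun i : Fin mL => Sum.inr (Sum.inl i)) Sum.inl
    (P, Pt)
  termination_by T + 1 - t
  decreasing_by omega


/-! Backward induction on `t`. If `P_{t+1}` and `P̃_{t+1}` are PSD, so are `Mᵀ P_{t+1} M` and
`Mᵀ P̃_{t+1} M`; hence `G_t` and `G̃_t` (whose weights `1 - p`, `p` are nonnegative) are `R_t` plus
a PSD matrix, so PD. Then `P_t` and `P̃_t` are Schur complements of PD blocks in PD matrices
(for `P̃_t`, in the principal `X ⊕ L` submatrix of `G̃_t`), hence PSD. -/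

namespace Matrix

theorem PosDef.posSemidef_schur_complement_inr {K : Type*} [Field K] [PartialOrder K]
    [StarRing K] [StarOrderedRing K] {a b : Type*} [Fintype a] [Fintype b] [DecidableEq b]
    {G : Matrix (a ⊕ b) (a ⊕ b) K} (hG : G.PosDef) :
    (G.submatrix Sum.inl Sum.inl -
      G.submatrix Sum.inl Sum.inr * (G.submatrix Sum.inr Sum.inr)⁻¹ *
        G.submatrix Sum.inr Sum.inl).PosSemidef := by
  have hD : G.toBlocks₂₂.PosDef := hG.submatrix Sum.inr_injective
  let _ := hD.isUnit.invertible
  have hC : G.toBlocks₁₂ᴴ = G.toBlocks₂₁ := by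
    conv_rhs =>
      rw [← hG.isHermitian.eq, ← fromBlocks_toBlocks G, fromBlocks_conjTranspose]
    rfl
  have hG' : (fromBlocks G.toBlocks₁₁ G.toBlocks₁₂ G.toBlocks₁₂ᴴ G.toBlocks₂₂).PosSemidef := by
    rw [hC, fromBlocks_toBlocks]
    exact hG.posSemidef
  have hS := (PosDef.fromBlocks₂₂ _ _ hD).mp hG'
  rwa [hC] at hS

theorem PosSemidef.transpose_mul_mul_same {ι κ : Type*} [Fintype ι] [Fintype κ]
    {P : Matrix κ κ ℝ} (hP : P.PosSemidef) (M : Matrix κ ι ℝ) :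
    (Mᵀ * P * M).PosSemidef := by
  simpa only [conjTranspose_eq_transpose_of_trivial] using hP.conjTranspose_mul_mul_same M

variable {ι κ : Type*} [Fintype ι] [Fintype κ] {R : Matrix ι ι ℝ} {P P' : Matrix κ κ ℝ}

theorem PosDef.add_transpose_mul_mul (hR : R.PosDef) (hP : P.PosSemidef) (M : Matrix κ ι ℝ) :
    (R + Mᵀ * P * M).PosDef :=
  hR.add_posSemidef (hP.transpose_mul_mul_same M)

theorem PosDef.add_smul_transpose_mul_mul_add_smul (hR : R.PosDef) (hP : P.PosSemidef)
    (hP' : P'.PosSemidef) (M : Matrix κ ι ℝ) {p : ℝ} (hp0 : 0 ≤ p) (hp1 : p ≤ 1) :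
    (R + (1 - p) • (Mᵀ * P * M) + p • (Mᵀ * P' * M)).PosDef :=
  (hR.add_posSemidef ((hP.transpose_mul_mul_same M).smul (sub_nonneg.mpr hp1))
    ).add_posSemidef ((hP'.transpose_mul_mul_same M).smul hp0)

end Matrix

section backRec

variable {n mL mR T : ℕ} {p : ℝ} {A : Matrix (Fin n) (Fin n) ℝ}
  {BL : Matrix (Fin n) (Fin mL) ℝ} {BR : Matrix (Fin n) (Fin mR) ℝ}
  {R : ℕ → Matrix (Fin n ⊕ (Fin mL ⊕ Fin mR)) (Fin n ⊕ (Fin mL ⊕ Fin mR)) ℝ}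

theorem backRec_posSemidef (hp0 : 0 ≤ p) (hp1 : p ≤ 1) (hR : ∀ t ≤ T, (R t).PosDef) (t : ℕ) :
    (backRec n mL mR T p A BL BR R t).1.PosSemidef ∧
      (backRec n mL mR T p A BL BR R t).2.PosSemidef := by
  rw [backRec]
  by_cases ht : T + 1 ≤ t
  · simp only [if_pos ht]
    exact ⟨.zero, .zero⟩
  · simp only [if_neg ht]
    obtain ⟨hP, hP'⟩ := backRec_posSemidef hp0 hp1 hR (t + 1)
    have hRt := hR t (by omega)
    have hG := hRt.add_transpose_mul_mul hP (catM n mL mR A BL BR)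
    have hGt := hRt.add_smul_transpose_mul_mul_add_smul hP hP' (catM n mL mR A BL BR) hp0 hp1
    have hGtXL := hGt.submatrix (Function.injective_id.sumMap Sum.inl_injective)
    exact ⟨hG.posSemidef_schur_complement_inr, hGtXL.posSemidef_schur_complement_inr⟩
termination_by T + 1 - t

end backRec

theorem stmt9_general (n mL mR : ℕ)
    (T : ℕ) (p : ℝ) (hp0 : 0 ≤ p) (hp1 : p ≤ 1)
    (A : Matrix (Fin n) (Fin n) ℝ) (BL : Matrix (Fin n) (Fin mL) ℝ)
    (BR : Matrix (Fin n) (Fin mR) ℝ)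
    (R : ℕ → Matrix (Fin n ⊕ (Fin mL ⊕ Fin mR)) (Fin n ⊕ (Fin mL ⊕ Fin mR)) ℝ)
    (hR : ∀ t ≤ T, (R t).PosDef) :
    ∀ t ≤ T,
      let M := catM n mL mR A BL BR
      let H := Mᵀ * (backRec n mL mR T p A BL BR R (t + 1)).1 * M
      let Ht := Mᵀ * (backRec n mL mR T p A BL BR R (t + 1)).2 * M
      (R t + H).PosDef ∧
      (R t + (1 - p) • H + p • Ht).PosDef ∧
      (backRec n mL mR T p A BL BR R t).1.PosSemidef ∧
      (backRec n mL mR T p A BL BR R t).2.PosSemidef := by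
  intro t ht M H Ht
  obtain ⟨hP, hP'⟩ := backRec_posSemidef (A := A) (BL := BL) (BR := BR) hp0 hp1 hR (t + 1)
  exact ⟨(hR t ht).add_transpose_mul_mul hP M,
    (hR t ht).add_smul_transpose_mul_mul_add_smul hP hP' M hp0 hp1,
    backRec_posSemidef hp0 hp1 hR t⟩

/-- If every `R_t`, `t = 0,…,T`, is symmetric positive definite
and `p ∈ [0,1]`, then for every `t ∈ {0,…,T}` the matrices
`G_t = R_t + H_t` and `G̃_t = R_t + (1−p) H_t + p H̃_t` are symmetric positive
definite, and `P_t`, `P̃_t` are symmetric positive semidefinite. -/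
theorem stmt9 (n mL mR : ℕ) (hn : 0 < n) (hmL : 0 < mL) (hmR : 0 < mR)
    (T : ℕ) (p : ℝ) (hp0 : 0 ≤ p) (hp1 : p ≤ 1)
    (A : Matrix (Fin n) (Fin n) ℝ) (BL : Matrix (Fin n) (Fin mL) ℝ)
    (BR : Matrix (Fin n) (Fin mR) ℝ)
    (R : ℕ → Matrix (Fin n ⊕ (Fin mL ⊕ Fin mR)) (Fin n ⊕ (Fin mL ⊕ Fin mR)) ℝ)
    (hR : ∀ t ≤ T, (R t).PosDef) :
    ∀ t ≤ T,
      let M := catM n mL mR A BL BR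
      let H := Mᵀ * (backRec n mL mR T p A BL BR R (t + 1)).1 * M
      let Ht := Mᵀ * (backRec n mL mR T p A BL BR R (t + 1)).2 * M
      (R t + H).PosDef ∧
      (R t + (1 - p) • H + p • Ht).PosDef ∧
      (backRec n mL mR T p A BL BR R t).1.PosSemidef ∧
      (backRec n mL mR T p A BL BR R t).2.PosSemidef :=
  stmt9_general n mL mR T p hp0 hp1 A BL BR R hR
end

section
/- Let θ be a probability measure on ℝⁿ with finite second moment, let X be a random vector with distribution θ, and let G and G̃ be symmetric matrices of size (n+m_L+m_R). For ū ∈ ℝ^{m_L}, u ∈ ℝ^{m_R}, and measurable q : ℝⁿ → ℝ^{m_L} with ∫ ‖q(x)‖² θ(dx) < ∞ and ∫ q(x) θ(dx) = 0, set S := [X; ū + q(X); u]. Then: (i) E[S] = [μ(θ); ū; u]; (ii) Cov(S) = Cov([X; q(X); 0]), where 0 ∈ ℝ^{m_R}; and consequently (iii) the infimum over all such (ū, u, q) of (E[S])ᵀ G (E[S]) + tr(G̃ · Cov(S)) equals the sum of the infimum over (ū, u) ∈ ℝ^{m_L} × ℝ^{m_R} of [μ(θ); ū; u]ᵀ G [μ(θ);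 ū; u] and the infimum over all feasible q of tr(G̃ · Cov([X; q(X); 0])). -/
/- The stacked vector `[X; ū + q(X); u]` is `[X; q(X); 0]` shifted by the constant `[0; ū; u]`,
which moves the mean to `[μ(θ); ū; u]` (as `q(X)` is centred) and leaves the covariance unchanged.
The objective is therefore a real function of `(ū, u)` plus a real function of `q`, and the
infimum of such a separable sum is the sum of the infima. -/

open Matrix MeasureTheory

/-- A feasible deviation function: measurable, θ-square-integrable, with
zero mean under `θ`. -/
def Feasible (n mL : ℕ) (θ : Measure (Fin n → ℝ))
    (q : (Fin n → ℝ) → Fin mL → ℝ) : Prop :=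
  Measurable q ∧ Integrable (fun x => ‖q x‖ ^ 2) θ ∧ (∫ x, q x ∂θ) = 0

lemma sumElim_add_eq_sumElim_zero_add {k l M : Type*} [AddCommMonoid M] (a b : k → M)
    (c : l → M) : Sum.elim (a + b) c = Sum.elim b 0 + Sum.elim a c := by
  ext (i | i) <;> simp [add_comm]

section VecMoments

variable {Ω : Type*} [MeasurableSpace Ω] {μ : Measure Ω}

lemma vecMean_sumElim {k l : Type*} (Y : Ω → k → ℝ) (Z : Ω → l → ℝ) :
    vecMean μ (fun ω => Sum.elim (Y ω) (Z ω)) = Sum.elim (vecMean μ Y) (vecMean μ Z) := by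
  ext (i | i) <;> rfl

lemma vecMean_const [IsProbabilityMeasure μ] {k : Type*} (c : k → ℝ) :
    vecMean μ (fun _ => c) = c := by
  ext i
  simp [vecMean]

lemma vecMean_add_const [IsProbabilityMeasure μ] {k : Type*} {Z : Ω → k → ℝ}
    (hZ : ∀ i, Integrable (fun ω => Z ω i) μ) (c : k → ℝ) :
    vecMean μ (fun ω => Z ω + c) = vecMean μ Z + c := by
  ext i
  simp [vecMean, integral_add (hZ i) (integrable_const (c i))]

lemma vecCov_congr_of_sub_vecMean {k : Type*} {S T : Ω → k → ℝ}
    (h : ∀ ω, S ω - vecMean μ S = T ω - vecMean μ T) : vecCov μ S = vecCov μ T := by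
  ext i j
  simp only [vecCov, of_apply, ← Pi.sub_apply, h]

lemma vecCov_sumElim_add_const [IsProbabilityMeasure μ] {k l : Type*} (Y : Ω → k → ℝ)
    {Z : Ω → l → ℝ} (hZ : ∀ i, Integrable (fun ω => Z ω i) μ) (c : l → ℝ) :
    vecCov μ (fun ω => Sum.elim (Y ω) (Z ω + c)) =
      vecCov μ (fun ω => Sum.elim (Y ω) (Z ω)) := by
  refine vecCov_congr_of_sub_vecMean fun ω => ?_
  rw [vecMean_sumElim, vecMean_sumElim, vecMean_add_const hZ]
  ext (i | i) <;> simp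

lemma vecMean_comp_of_map_eq {E : Type*} [MeasurableSpace E] {θ : Measure E} {X : Ω → E}
    (hX : AEMeasurable X μ) (hXlaw : μ.map X = θ) {k : Type*} {f : E → k → ℝ}
    (hf : ∀ i, AEStronglyMeasurable (fun x => f x i) θ) :
    vecMean μ (fun ω => f (X ω)) = vecMean θ f := by
  subst hXlaw
  ext i
  exact (integral_map hX (hf i)).symm

end VecMoments

namespace EReal

lemma sInf_image2_add {A B : Set EReal} (hA : A.Nonempty) (hB : B.Nonempty)
    (hAtop : ⊤ ∉ A) (hBtop : ⊤ ∉ B) :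
    sInf (Set.image2 (· + ·) A B) = sInf A + sInf B := by
  have sInf_ne_top {C : Set EReal} (hC : C.Nonempty) (hCtop : ⊤ ∉ C) : sInf C ≠ ⊤ := by
    obtain ⟨c, hc⟩ := hC
    exact ne_top_of_le_ne_top (fun h => hCtop (h ▸ hc)) (sInf_le hc)
  refine le_antisymm ?_ (le_sInf ?_)
  · refine le_add_of_forall_gt (Or.inr (sInf_ne_top hB hBtop)) (Or.inl (sInf_ne_top hA hAtop))
      fun a' ha' b' hb' => ?_
    obtain ⟨a, ha, hab⟩ := sInf_lt_iff.mp ha'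
    obtain ⟨b, hb, hbb⟩ := sInf_lt_iff.mp hb'
    exact (sInf_le (Set.mem_image2_of_mem ha hb)).trans (add_le_add hab.le hbb.le)
  · rintro _ ⟨a, ha, b, hb, rfl⟩
    exact add_le_add (sInf_le ha) (sInf_le hb)

end EReal

namespace Feasible

variable {n mL : ℕ} {θ : Measure (Fin n → ℝ)} {q : (Fin n → ℝ) → Fin mL → ℝ}

lemma zero : Feasible n mL θ 0 :=
  ⟨measurable_const, by simp, by simp⟩

variable [IsFiniteMeasure θ]

lemma integrable (hq : Feasible n mL θ q) : Integrable q θ :=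
  ((memLp_two_iff_integrable_sq_norm hq.1.aestronglyMeasurable).2 hq.2.1).integrable one_le_two

lemma vecMean_eq_zero (hq : Feasible n mL θ q) : vecMean θ q = 0 := by
  ext j
  rw [vecMean, ← eval_integral hq.integrable.eval j, hq.2.2, Pi.zero_apply]

end Feasible

section Stacked

variable {n mL mR : ℕ} {θ : Measure (Fin n → ℝ)} [IsFiniteMeasure θ]
  {Ω : Type*} [MeasurableSpace Ω] {P : Measure Ω}
  {X : Ω → Fin n → ℝ} {q : (Fin n → ℝ) → Fin mL → ℝ}

lemma integrable_sumElim_comp_zero (hX : Measurable X) (hXlaw : P.map X = θ)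
    (hq : Feasible n mL θ q) (i : Fin mL ⊕ Fin mR) :
    Integrable (fun ω => Sum.elim (q (X ω)) (0 : Fin mR → ℝ) i) P := by
  rcases i with j | j
  · exact (hXlaw ▸ hq.integrable.eval j).comp_measurable hX
  · exact integrable_zero _ _ _

variable [IsProbabilityMeasure P]

lemma vecMean_stacked (hX : Measurable X) (hXlaw : P.map X = θ) (hq : Feasible n mL θ q)
    (ub : Fin mL → ℝ) (u : Fin mR → ℝ) :
    vecMean P (fun ω => Sum.elim (X ω) (Sum.elim (ub + q (X ω)) u)) =
      Sum.elim (measMean θ) (Sum.elim ub u) := by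
  have hXmean : vecMean P X = measMean θ :=
    vecMean_comp_of_map_eq hX.aemeasurable hXlaw (f := id)
      fun i => (measurable_pi_apply i).aestronglyMeasurable
  have hqmean : vecMean P (fun ω => q (X ω)) = 0 :=
    (vecMean_comp_of_map_eq hX.aemeasurable hXlaw
      fun i => (measurable_pi_apply i).comp hq.1 |>.aestronglyMeasurable).trans hq.vecMean_eq_zero
  simp_rw [sumElim_add_eq_sumElim_zero_add, vecMean_sumElim,
    vecMean_add_const (integrable_sumElim_comp_zero hX hXlaw hq), vecMean_sumElim, hXmean, hqmean,
    vecMean_const, Sum.elim_zero_zero, zero_add]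

lemma vecCov_stacked (hX : Measurable X) (hXlaw : P.map X = θ) (hq : Feasible n mL θ q)
    (ub : Fin mL → ℝ) (u : Fin mR → ℝ) :
    vecCov P (fun ω => Sum.elim (X ω) (Sum.elim (ub + q (X ω)) u)) =
      vecCov P (fun ω => Sum.elim (X ω) (Sum.elim (q (X ω)) (0 : Fin mR → ℝ))) := by
  simp_rw [sumElim_add_eq_sumElim_zero_add]
  exact vecCov_sumElim_add_const X (integrable_sumElim_comp_zero hX hXlaw hq) _

end Stacked

theorem stmt12_general (n mL mR : ℕ)
    (θ : Measure (Fin n → ℝ)) [IsProbabilityMeasure θ]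
    {Ω : Type*} [MeasurableSpace Ω] (P : Measure Ω) [IsProbabilityMeasure P]
    (X : Ω → Fin n → ℝ) (hX : Measurable X) (hXlaw : Measure.map X P = θ)
    (G Gt : Matrix (Fin n ⊕ (Fin mL ⊕ Fin mR)) (Fin n ⊕ (Fin mL ⊕ Fin mR)) ℝ) :
    let Sfun : (Fin mL → ℝ) → (Fin mR → ℝ) → ((Fin n → ℝ) → Fin mL → ℝ) →
        Ω → (Fin n ⊕ (Fin mL ⊕ Fin mR)) → ℝ :=
      fun ub u q ω => Sum.elim (X ω) (Sum.elim (ub + q (X ω)) u)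
    (∀ (ub : Fin mL → ℝ) (u : Fin mR → ℝ) (q : (Fin n → ℝ) → Fin mL → ℝ),
        Feasible n mL θ q →
        -- (i)
        vecMean P (Sfun ub u q) = Sum.elim (measMean θ) (Sum.elim ub u) ∧
        -- (ii)
        vecCov P (Sfun ub u q) =
          vecCov P (fun ω => Sum.elim (X ω) (Sum.elim (q (X ω)) (0 : Fin mR → ℝ)))) ∧
    -- (iii)
    sInf {v : EReal | ∃ (ub : Fin mL → ℝ) (u : Fin mR → ℝ)
          (q : (Fin n → ℝ) → Fin mL → ℝ), Feasible n mL θ q ∧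
          v = ((vecMean P (Sfun ub u q) ⬝ᵥ G.mulVec (vecMean P (Sfun ub u q)) +
              (Gt * vecCov P (Sfun ub u q)).trace : ℝ) : EReal)} =
      sInf {v : EReal | ∃ (ub : Fin mL → ℝ) (u : Fin mR → ℝ),
          v = ((Sum.elim (measMean θ) (Sum.elim ub u) ⬝ᵥ
              G.mulVec (Sum.elim (measMean θ) (Sum.elim ub u)) : ℝ) : EReal)} +
      sInf {v : EReal | ∃ q : (Fin n → ℝ) → Fin mL → ℝ, Feasible n mL θ q ∧
          v = (((Gt * vecCov P
              (fun ω => Sum.elim (X ω) (Sum.elim (q (X ω)) (0 : Fin mR → ℝ)))).trace : ℝ)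
            : EReal)} := by
  intro Sfun
  have hmean {ub : Fin mL → ℝ} {u : Fin mR → ℝ} {q} (hq : Feasible n mL θ q) :=
    vecMean_stacked hX hXlaw hq ub u
  have hcov {ub : Fin mL → ℝ} {u : Fin mR → ℝ} {q} (hq : Feasible n mL θ q) :=
    vecCov_stacked hX hXlaw hq ub u
  refine ⟨fun ub u q hq => ⟨hmean hq, hcov hq⟩, ?_⟩
  refine (congrArg sInf ?_).trans <| EReal.sInf_image2_add ⟨_, 0, 0, rfl⟩ ⟨_, 0, .zero, rfl⟩
    (by rintro ⟨_, _, h⟩; exact EReal.coe_ne_top _ h.symm)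
    (by rintro ⟨_, _, h⟩; exact EReal.coe_ne_top _ h.symm)
  ext v
  constructor
  · rintro ⟨ub, u, q, hq, rfl⟩
    exact ⟨_, ⟨ub, u, rfl⟩, _, ⟨q, hq, rfl⟩, by rw [hmean hq, hcov hq, EReal.coe_add]⟩
  · rintro ⟨_, ⟨ub, u, rfl⟩, _, ⟨q, hq, rfl⟩, rfl⟩
    exact ⟨ub, u, q, hq, by rw [hmean hq, hcov hq, EReal.coe_add]⟩

/-- With `S = [X; ū + q(X); u]` for feasible `q`:
(i) `E[S] = [μ(θ); ū; u]`; (ii) `Cov(S) = Cov([X; q(X); 0])`; and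
(iii) the infimum over `(ū, u, q)` of `E[S]ᵀ G E[S] + tr(G̃ Cov(S))` equals
the infimum over `(ū, u)` of `[μ(θ); ū; u]ᵀ G [μ(θ); ū; u]` plus the
infimum over feasible `q` of `tr(G̃ Cov([X; q(X); 0]))` (infima taken in the
extended reals). -/
theorem stmt12 (n mL mR : ℕ)
    (θ : Measure (Fin n → ℝ)) [IsProbabilityMeasure θ]
    (hθ2 : Integrable (fun x => ‖x‖ ^ 2) θ)
    {Ω : Type*} [MeasurableSpace Ω] (P : Measure Ω) [IsProbabilityMeasure P]
    (X : Ω → Fin n → ℝ) (hX : Measurable X) (hXlaw : Measure.map X P = θ)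
    (G Gt : Matrix (Fin n ⊕ (Fin mL ⊕ Fin mR)) (Fin n ⊕ (Fin mL ⊕ Fin mR)) ℝ)
    (hG : G.IsSymm) (hGt : Gt.IsSymm) :
    let Sfun : (Fin mL → ℝ) → (Fin mR → ℝ) → ((Fin n → ℝ) → Fin mL → ℝ) →
        Ω → (Fin n ⊕ (Fin mL ⊕ Fin mR)) → ℝ :=
      fun ub u q ω => Sum.elim (X ω) (Sum.elim (ub + q (X ω)) u)
    (∀ (ub : Fin mL → ℝ) (u : Fin mR → ℝ) (q : (Fin n → ℝ) → Fin mL → ℝ),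
        Feasible n mL θ q →
        -- (i)
        vecMean P (Sfun ub u q) = Sum.elim (measMean θ) (Sum.elim ub u) ∧
        -- (ii)
        vecCov P (Sfun ub u q) =
          vecCov P (fun ω => Sum.elim (X ω) (Sum.elim (q (X ω)) (0 : Fin mR → ℝ)))) ∧
    -- (iii)
    sInf {v : EReal | ∃ (ub : Fin mL → ℝ) (u : Fin mR → ℝ)
          (q : (Fin n → ℝ) → Fin mL → ℝ), Feasible n mL θ q ∧
          v = ((vecMean P (Sfun ub u q) ⬝ᵥ G.mulVec (vecMean P (Sfun ub u q)) +
              (Gt * vecCov P (Sfun ub u q)).trace : ℝ) : EReal)} =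
      sInf {v : EReal | ∃ (ub : Fin mL → ℝ) (u : Fin mR → ℝ),
          v = ((Sum.elim (measMean θ) (Sum.elim ub u) ⬝ᵥ
              G.mulVec (Sum.elim (measMean θ) (Sum.elim ub u)) : ℝ) : EReal)} +
      sInf {v : EReal | ∃ q : (Fin n → ℝ) → Fin mL → ℝ, Feasible n mL θ q ∧
          v = (((Gt * vecCov P
              (fun ω => Sum.elim (X ω) (Sum.elim (q (X ω)) (0 : Fin mR → ℝ)))).trace : ℝ)
            : EReal)} :=
  stmt12_general n mL mR θ P X hX hXlaw G Gt
end
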